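/- For each n ≥ 0, applying the operator A₅ = 2x + t·d/dx n times to the constant function 1 yields the heat polynomial evaluated at (2x,t): A₅ⁿ·1 = vₙ(2x,t), where vₙ(x,t) = Σ_{k=0}^{⌊n/2⌋} n!/((n-2k)!·k!) · x^{n-2k} t^k. -/

import Mathlib

/-!
Rewriting `n! / ((n - 2k)! k!)` as `n.descFactorial (2k) / k!` makes the coefficients vanish for
`2k > n`, so `vₙ` may be summed over any range past `n / 2`. In that form two identities of the
falling factorial give `∂ᵧ vₙ₊₁ = (n + 1) vₙ` and `vₙ₊₂ = y vₙ₊₁ + 2 (n + 1) t vₙ`. Hence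
`A₅ (vₙ(2·, t)) = 2x vₙ(2x, t) + 2 n t vₙ₋₁(2x, t) = vₙ₊₁(2x, t)`, and the theorem follows by
induction on `n`.
-/

open Nat in
/-- The heat polynomial `vₙ(x,t) = Σ_{k=0}^{⌊n/2⌋} n!/((n-2k)!·k!)·x^{n-2k}·t^k`. -/
noncomputable def heatPoly (n : ℕ) (x t : ℝ) : ℝ :=
  ∑ k ∈ Finset.range (n/2 + 1),
    (n ! : ℝ) / (((n - 2*k)! : ℝ) * (k ! : ℝ)) * x^(n - 2*k) * t^k

/-- The operator `A₅ = 2x + t·d/dx` acting on functions of `x`. -/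
noncomputable def A5 (t : ℝ) (f : ℝ → ℝ) : ℝ → ℝ := fun x => 2*x*f x + t * deriv f x

open Nat Finset

theorem Nat.add_one_descFactorial_add_one (n j : ℕ) :
    (n + 1).descFactorial (j + 1) = n.descFactorial (j + 1) + (j + 1) * n.descFactorial j := by
  simp only [descFactorial_eq_factorial_mul_choose, choose_succ_succ, factorial_succ]
  ring

theorem heatPoly_eq_sum_descFactorial {n N : ℕ} (hN : n / 2 < N) (y t : ℝ) :
    heatPoly n y t =
      ∑ k ∈ range N, (n.descFactorial (2 * k) : ℝ) / k ! * y ^ (n - 2 * k) * t ^ k := by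
  rw [heatPoly]
  refine (sum_congr rfl fun k hk => ?_).trans
    (sum_subset (range_subset_range.2 (by omega)) fun k _ hk => ?_)
  · have hkn : 2 * k ≤ n := by rw [mem_range] at hk; omega
    have : ((n - 2 * k)! : ℝ) ≠ 0 := by positivity
    rw [← factorial_mul_descFactorial hkn]
    push_cast
    field_simp
  · rw [mem_range] at hk
    rw [descFactorial_eq_zero_iff_lt.2 (by omega), cast_zero, zero_div, zero_mul, zero_mul]

theorem hasDerivAt_heatPoly (n : ℕ) (y t : ℝ) :
    HasDerivAt (fun y => heatPoly (n + 1) y t) ((n + 1) * heatPoly n y t) y := by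
  simp only [heatPoly_eq_sum_descFactorial (n := n + 1) (N := n + 1) (by omega),
    heatPoly_eq_sum_descFactorial (n := n) (N := n + 1) (by omega), mul_sum]
  refine HasDerivAt.fun_sum fun k _ => ?_
  refine (((hasDerivAt_pow (n + 1 - 2 * k) y).const_mul
    ((n + 1).descFactorial (2 * k) / k ! : ℝ)).mul_const (t ^ k)).congr_deriv ?_
  have hdesc : ((n + 1 - 2 * k : ℕ) : ℝ) * (n + 1).descFactorial (2 * k) =
      (n + 1) * n.descFactorial (2 * k) := by
    exact_mod_cast succ_descFactorial n (2 * k)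
  rw [show n + 1 - 2 * k - 1 = n - 2 * k by omega]
  linear_combination y ^ (n - 2 * k) * t ^ k / k ! * hdesc

theorem heatPoly_add_two (n : ℕ) (y t : ℝ) :
    heatPoly (n + 2) y t = y * heatPoly (n + 1) y t + 2 * (n + 1) * t * heatPoly n y t := by
  rw [heatPoly_eq_sum_descFactorial (N := n + 2) (by omega), sum_range_succ']
  conv_rhs => rw [heatPoly_eq_sum_descFactorial (n := n + 1) (N := n + 2) (by omega),
    sum_range_succ', heatPoly_eq_sum_descFactorial (N := n + 1) (by omega)]
  rw [mul_add, mul_sum, mul_sum, add_right_comm, ← sum_add_distrib]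
  congr 1
  · refine sum_congr rfl fun k _ => ?_
    rw [show 2 * (k + 1) = 2 * k + 2 by ring, show n + 2 - (2 * k + 2) = n - 2 * k by omega]
    have hdesc : ((n + 2).descFactorial (2 * k + 2) : ℝ) =
        (n + 1).descFactorial (2 * k + 2) + (2 * k + 2) * (n + 1) * n.descFactorial (2 * k) := by
      have := Nat.add_one_descFactorial_add_one (n + 1) (2 * k + 1)
      rw [succ_descFactorial_succ n (2 * k)] at this
      push_cast [this]
      ring
    -- when `2k + 1 > n` the exponents disagree, but then the coefficient vanishes
    have hpow : ((n + 1).descFactorial (2 * k + 2) : ℝ) * y ^ (n - 2 * k) =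
        (n + 1).descFactorial (2 * k + 2) * (y * y ^ (n + 1 - (2 * k + 2))) := by
      rcases le_or_gt (2 * k + 2) (n + 1) with hle | hlt
      · rw [← _root_.pow_succ', show n + 1 - (2 * k + 2) + 1 = n - 2 * k by omega]
      · rw [descFactorial_eq_zero_iff_lt.2 hlt, cast_zero, zero_mul, zero_mul]
    rw [factorial_succ, cast_mul, cast_succ, pow_succ, hdesc]
    field_simp
    linear_combination t ^ (k + 1) * hpow
  · simp only [mul_zero, descFactorial_zero, factorial_zero, cast_one, div_one, tsub_zero,
      pow_zero, mul_one, pow_succ]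
    ring

/-- `A₅ⁿ · 1 = vₙ(2x, t)`. -/
theorem stmt14 (n : ℕ) (t x : ℝ) :
    (A5 t)^[n] (fun _ => 1) x = heatPoly n (2*x) t := by
  induction n generalizing x with
  | zero => simp [heatPoly]
  | succ n ih =>
    rw [Function.iterate_succ_apply', funext ih]
    show 2 * x * heatPoly n (2 * x) t + t * deriv (fun x => heatPoly n (2 * x) t) x = _
    cases n with
    | zero => simp [heatPoly]
    | succ m =>
      rw [deriv_comp_mul_left 2 (fun y => heatPoly (m + 1) y t),
        (hasDerivAt_heatPoly m (2 * x) t).deriv, heatPoly_add_two, smul_eq_mul]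
      ring
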